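/- For vectors a,b of length n and c of length m over an alphabet of size q, d_E(ac, b) ≥ d_E(a,b)/2. -/

import Mathlib

/-- A single edit step: insert or delete one symbol. -/
def EditStep {α : Type*} (a b : List α) : Prop :=
  (∃ i x, b = a.insertIdx i x) ∨ (∃ i x, a = b.insertIdx i x)

/-- Edit distance: minimum number of insertions and deletions transforming `a` into `b`. -/
noncomputable def editDist {α : Type*} (a b : List α) : ℕ :=
  sInf {n : ℕ | ∃ f : ℕ → List α, f 0 = a ∧ f n = b ∧ ∀ i < n, EditStep (f i) (f (i + 1))}

/-!
Appending `c` to `a` costs at most `|c|` insertions, so by the triangle inequality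
`d_E(a, b) ≤ |c| + d_E(ac, b)`. Since every edit step changes the length by at most one and
`|ac| = |b| + |c|`, also `|c| ≤ d_E(ac, b)`.
-/

variable {α : Type*}

theorem EditStep.symm {a b : List α} (h : EditStep a b) : EditStep b a :=
  Or.symm h

theorem EditStep.length_le {a b : List α} (h : EditStep a b) : a.length ≤ b.length + 1 := by
  rcases h with ⟨i, x, rfl⟩ | ⟨i, x, rfl⟩
  · exact (List.length_le_length_insertIdx ..).trans (Nat.le_succ _)
  · exact List.length_insertIdx_le_succ ..

theorem editStep_append_take_succ (a b : List α) {i : ℕ} (hi : i < b.length) :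
    EditStep (a ++ b.take i) (a ++ b.take (i + 1)) := by
  refine .inl ⟨(a ++ b.take i).length, b[i], ?_⟩
  rw [List.insertIdx_length_self, List.take_succ_eq_append_getElem hi, List.append_assoc]

def EditReachable (a b : List α) (n : ℕ) : Prop :=
  ∃ f : ℕ → List α, f 0 = a ∧ f n = b ∧ ∀ i < n, EditStep (f i) (f (i + 1))

namespace EditReachable

theorem symm {a b : List α} {n : ℕ} (h : EditReachable a b n) : EditReachable b a n := by
  obtain ⟨f, hf0, hfn, hstep⟩ := h
  refine ⟨fun i => f (n - i), by simpa, by simpa, fun i hi => ?_⟩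
  have hi' : n - (i + 1) + 1 = n - i := by omega
  simpa only [← hi'] using (hstep (n - (i + 1)) (by omega)).symm

theorem trans {a b c : List α} {k l : ℕ} (hab : EditReachable a b k) (hbc : EditReachable b c l) :
    EditReachable a c (k + l) := by
  obtain ⟨f, hf0, hfk, hf⟩ := hab
  obtain ⟨g, hg0, hgl, hg⟩ := hbc
  have hglue : ∀ i, k ≤ i → (if i ≤ k then f i else g (i - k)) = g (i - k) := by
    intro i hi
    split_ifs with h
    · obtain rfl : i = k := le_antisymm h hi
      simp [hfk, hg0]
    · rfl
  refine ⟨fun i => if i ≤ k then f i else g (i - k), by simp [hf0], ?_, fun i hi => ?_⟩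
  · dsimp only
    rw [hglue _ (by omega), Nat.add_sub_cancel_left, hgl]
  · dsimp only
    by_cases hik : i < k
    · rw [if_pos hik.le, if_pos (Nat.succ_le_of_lt hik)]
      exact hf i hik
    · rw [hglue _ (by omega), hglue _ (by omega), Nat.sub_add_comm (by omega)]
      exact hg _ (by omega)

theorem length_le {a b : List α} {n : ℕ} (h : EditReachable a b n) :
    a.length ≤ b.length + n := by
  obtain ⟨f, rfl, rfl, hstep⟩ := h
  induction n with
  | zero => simp
  | succ k ih =>
    have hlast := (hstep k (by omega)).length_le
    have hprefix := ih fun i hi => hstep i (by omega)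
    omega

end EditReachable

theorem editReachable_append_right (a c : List α) : EditReachable a (a ++ c) c.length :=
  ⟨fun i => a ++ c.take i, by simp, by simp, fun _ hi => editStep_append_take_succ a c hi⟩

theorem editReachable_length_add_length (a b : List α) :
    EditReachable a b (a.length + b.length) :=
  (editReachable_append_right [] a).symm.trans (editReachable_append_right [] b)

theorem editDist_le_of_editReachable {a b : List α} {n : ℕ} (h : EditReachable a b n) :
    editDist a b ≤ n :=
  Nat.sInf_le h

theorem editReachable_editDist (a b : List α) : EditReachable a b (editDist a b) :=
  Nat.sInf_mem (s := {n | EditReachable a b n}) ⟨_, editReachable_length_add_length a b⟩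

theorem editDist_triangle (a b c : List α) : editDist a c ≤ editDist a b + editDist b c :=
  editDist_le_of_editReachable ((editReachable_editDist a b).trans (editReachable_editDist b c))

theorem length_le_length_add_editDist (a b : List α) : a.length ≤ b.length + editDist a b :=
  (editReachable_editDist a b).length_le

theorem editDist_append_right_le (a c : List α) : editDist a (a ++ c) ≤ c.length :=
  editDist_le_of_editReachable (editReachable_append_right a c)

theorem editDist_le_two_mul_editDist_append {a b : List α} (c : List α)
    (hab : a.length = b.length) : editDist a b ≤ 2 * editDist (a ++ c) b := by
  have hc : c.length ≤ editDist (a ++ c) b := by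
    have := length_le_length_add_editDist (a ++ c) b
    rw [List.length_append, hab] at this
    omega
  calc editDist a b ≤ editDist a (a ++ c) + editDist (a ++ c) b := editDist_triangle _ _ _
    _ ≤ c.length + editDist (a ++ c) b := by gcongr; exact editDist_append_right_le a c
    _ ≤ 2 * editDist (a ++ c) b := by omega

theorem editDist_div_two_le_editDist_append_general (q n : ℕ) (a b c : List (Fin q))
    (ha : a.length = n) (hb : b.length = n) :
    editDist a b / 2 ≤ editDist (a ++ c) b :=
  Nat.div_le_of_le_mul (editDist_le_two_mul_editDist_append c (ha.trans hb.symm))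

/-- `d_E(ac, b) ≥ d_E(a,b)/2`. -/
theorem editDist_div_two_le_editDist_append (q n m : ℕ) (a b c : List (Fin q))
    (ha : a.length = n) (hb : b.length = n) (hc : c.length = m) :
    editDist a b / 2 ≤ editDist (a ++ c) b :=
  editDist_div_two_le_editDist_append_general q n a b c ha hb
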